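/- In a graph where all type-A players are pairwise adjacent (forming a clique), and each type-B player is adjacent to exactly one fixed type-A node j, the following hold: every type-B node has distance 1 to j, distance 2 to every other type-A node, and distance 2 to every other type-B node. Consequently the social cost equals 2|T_B|(|T_B| − 1 + c + (A+1)(|T_A| − 1/2)) + |T_A|(|T_A| − 1)(c_A + A), where c = (c_A + c_B)/2. -/

import Mathlib

/-!
The hub, type-A node `0`, is adjacent to every other node, so it is a common neighbour of any two
distinct non-adjacent nodes: every distance is `0`, `1` or `2` according as the two nodes are
equal, adjacent, or neither. A type-A node then pays `A` towards each other type-A node and `1`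
or `2` towards each type-B node, depending on whether it is the hub; a type-B node pays `A` to
the hub, `2A` to the other type-A nodes and `2` to the other type-B nodes. Summing these
per-node costs over the three kinds of node gives the formula.
-/

open SimpleGraph Finset

/-- Cost of player `i`: link costs plus weighted distances (weight `A` to type-A nodes). -/
noncomputable def cost {V : Type*} [Fintype V] [DecidableEq V] (A cA cB : ℝ) (tA : V → Bool)
    (G : SimpleGraph V) (i : V) : ℝ :=
  (Set.ncard {j | G.Adj i j} : ℝ) * (if tA i then cA else cB) +
    ∑ j ∈ Finset.univ.erase i, (if tA j then A else 1) * (G.dist i j : ℝ)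

/-- Social cost: sum of all players' costs. -/
noncomputable def socialCost {V : Type*} [Fintype V] [DecidableEq V] (A cA cB : ℝ)
    (tA : V → Bool) (G : SimpleGraph V) : ℝ :=
  ∑ i, cost A cA cB tA G i

/-- The graph on `Fin nA ⊕ Fin nB`: complete graph on the type-A nodes, and every type-B
node attached as a leaf to the distinguished type-A node `0`. -/
def cliqueWithLeaves (nA nB : ℕ) : SimpleGraph (Fin nA ⊕ Fin nB) :=
  SimpleGraph.fromRel (fun u v =>
    match u, v with
    | .inl _, .inl _ => True
    | .inl a, .inr _ => (a : ℕ) = 0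
    | .inr _, .inl a => (a : ℕ) = 0
    | .inr _, .inr _ => False)

namespace SimpleGraph

variable {V : Type*} {G : SimpleGraph V}

theorem dist_eq_two_of_mem_commonNeighbors {u v w : V} (hne : u ≠ v) (hnadj : ¬G.Adj u v)
    (hw : w ∈ G.commonNeighbors u v) : G.dist u v = 2 := by
  simp [dist, edist_eq_two_iff.mpr ⟨hne, hnadj, w, hw⟩]

theorem dist_eq_ite_of_forall_adj [DecidableEq V] [DecidableRel G.Adj] {x : V}
    (hx : ∀ v, v ≠ x → G.Adj x v) (u v : V) :
    G.dist u v = if u = v then 0 else if G.Adj u v then 1 else 2 := by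
  split_ifs with huv hadj
  · simp [huv]
  · exact dist_eq_one_iff_adj.mpr hadj
  · refine dist_eq_two_of_mem_commonNeighbors huv hadj (w := x) ?_
    have hu : u ≠ x := by rintro rfl; exact hadj (hx v (Ne.symm huv))
    have hv : v ≠ x := by rintro rfl; exact hadj (hx u huv).symm
    exact G.mem_commonNeighbors.mpr ⟨(hx u hu).symm, (hx v hv).symm⟩

theorem ncard_setOf_adj_eq_sum [Fintype V] [DecidableRel G.Adj] (v : V) :
    (Set.ncard {w | G.Adj v w} : ℝ) = ∑ w, if G.Adj v w then 1 else 0 := by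
  rw [Set.ncard_eq_toFinset_card', Set.toFinset_ofPred, Finset.natCast_card_filter]

end SimpleGraph

theorem cost_eq_add_sum {V : Type*} [Fintype V] [DecidableEq V] (A cA cB : ℝ) (tA : V → Bool)
    (G : SimpleGraph V) (i : V) :
    cost A cA cB tA G i = (Set.ncard {j | G.Adj i j} : ℝ) * (if tA i then cA else cB) +
      ∑ j, (if tA j then A else 1) * (G.dist i j : ℝ) := by
  rw [cost, Finset.sum_erase _ (by simp)]

theorem Fin.sum_ite_val_eq_zero {n : ℕ} (hn : 0 < n) (p q : ℝ) :
    ∑ x : Fin n, (if (x : ℕ) = 0 then p else q) = p + (n - 1) * q := by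
  obtain ⟨m, rfl⟩ := Nat.exists_eq_add_one_of_ne_zero hn.ne'
  simp [Fin.sum_univ_succ]

theorem Fintype.sum_ite_eq_zero_else {α : Type*} [Fintype α] [DecidableEq α] (a : α) (c : ℝ) :
    ∑ x, (if a = x then 0 else c) = (Fintype.card α - 1) * c := by
  have h : ∀ x, (if a = x then 0 else c) = c - if a = x then c else 0 := fun x => by
    split_ifs <;> ring
  simp only [h, Finset.sum_sub_distrib, Finset.sum_const, Finset.sum_ite_eq, Finset.mem_univ,
    if_true, nsmul_eq_mul, Finset.card_univ]
  ring

section cliqueWithLeaves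
variable {nA nB : ℕ}

@[simp] theorem cliqueWithLeaves_adj_inl_inl {a a' : Fin nA} :
    (cliqueWithLeaves nA nB).Adj (.inl a) (.inl a') ↔ a ≠ a' := by
  simp [cliqueWithLeaves]

@[simp] theorem cliqueWithLeaves_adj_inl_inr {a : Fin nA} {b : Fin nB} :
    (cliqueWithLeaves nA nB).Adj (.inl a) (.inr b) ↔ (a : ℕ) = 0 := by
  simp [cliqueWithLeaves]

@[simp] theorem cliqueWithLeaves_adj_inr_inl {a : Fin nA} {b : Fin nB} :
    (cliqueWithLeaves nA nB).Adj (.inr b) (.inl a) ↔ (a : ℕ) = 0 := by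
  simp [cliqueWithLeaves]

@[simp] theorem cliqueWithLeaves_not_adj_inr_inr {b b' : Fin nB} :
    ¬ (cliqueWithLeaves nA nB).Adj (.inr b) (.inr b') := by
  simp [cliqueWithLeaves]

instance : DecidableRel (cliqueWithLeaves nA nB).Adj
  | .inl _, .inl _ => decidable_of_iff _ cliqueWithLeaves_adj_inl_inl.symm
  | .inl _, .inr _ => decidable_of_iff _ cliqueWithLeaves_adj_inl_inr.symm
  | .inr _, .inl _ => decidable_of_iff _ cliqueWithLeaves_adj_inr_inl.symm
  | .inr _, .inr _ => decidable_of_iff False (iff_of_false id cliqueWithLeaves_not_adj_inr_inr)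

theorem cliqueWithLeaves_dist (hA : 0 < nA) (u v : Fin nA ⊕ Fin nB) :
    (cliqueWithLeaves nA nB).dist u v =
      if u = v then 0 else if (cliqueWithLeaves nA nB).Adj u v then 1 else 2 := by
  refine SimpleGraph.dist_eq_ite_of_forall_adj (x := .inl ⟨0, hA⟩) ?_ u v
  rintro (a | b) h
  · simpa [Fin.ext_iff, eq_comm] using h
  · simp

theorem cliqueWithLeaves_dist_inl_inl (hA : 0 < nA) (a a' : Fin nA) :
    (cliqueWithLeaves nA nB).dist (.inl a) (.inl a') = if a = a' then 0 else 1 := by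
  rw [cliqueWithLeaves_dist hA]
  by_cases h : a = a' <;> simp [h]

theorem cliqueWithLeaves_dist_inl_inr (hA : 0 < nA) (a : Fin nA) (b : Fin nB) :
    (cliqueWithLeaves nA nB).dist (.inl a) (.inr b) = if (a : ℕ) = 0 then 1 else 2 := by
  simp [cliqueWithLeaves_dist hA]

theorem cliqueWithLeaves_dist_inr_inl (hA : 0 < nA) (b : Fin nB) (a : Fin nA) :
    (cliqueWithLeaves nA nB).dist (.inr b) (.inl a) = if (a : ℕ) = 0 then 1 else 2 := by
  simp [cliqueWithLeaves_dist hA]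

theorem cliqueWithLeaves_dist_inr_inr (hA : 0 < nA) (b b' : Fin nB) :
    (cliqueWithLeaves nA nB).dist (.inr b) (.inr b') = if b = b' then 0 else 2 := by
  simp [cliqueWithLeaves_dist hA]

variable (A cA cB : ℝ)

theorem cost_cliqueWithLeaves_inl (hA : 0 < nA) (a : Fin nA) :
    cost A cA cB (fun v => v.isLeft) (cliqueWithLeaves nA nB) (.inl a) =
      (nA - 1) * (cA + A) + 2 * nB + if (a : ℕ) = 0 then (nB : ℝ) * (cA - 1) else 0 := by
  have hdeg : (Set.ncard {j | (cliqueWithLeaves nA nB).Adj (.inl a) j} : ℝ) =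
      nA - 1 + if (a : ℕ) = 0 then (nB : ℝ) else 0 := by
    rw [SimpleGraph.ncard_setOf_adj_eq_sum, Fintype.sum_sum_type]
    simp [Fintype.sum_ite_eq_zero_else]
  have hdist : ∑ j, (if j.isLeft then A else 1) * ((cliqueWithLeaves nA nB).dist (.inl a) j : ℝ) =
      A * (nA - 1) + if (a : ℕ) = 0 then (nB : ℝ) else 2 * nB := by
    rw [Fintype.sum_sum_type]
    simp [Fintype.sum_ite_eq_zero_else, cliqueWithLeaves_dist_inl_inl hA,
      cliqueWithLeaves_dist_inl_inr hA, mul_comm]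
  rw [cost_eq_add_sum, hdeg, hdist]
  simp only [Sum.isLeft_inl, ↓reduceIte]
  split_ifs <;> ring

theorem cost_cliqueWithLeaves_inr (hA : 0 < nA) (b : Fin nB) :
    cost A cA cB (fun v => v.isLeft) (cliqueWithLeaves nA nB) (.inr b) =
      cB + A * (2 * nA - 1) + 2 * (nB - 1) := by
  have hdeg : (Set.ncard {j | (cliqueWithLeaves nA nB).Adj (.inr b) j} : ℝ) = 1 := by
    rw [SimpleGraph.ncard_setOf_adj_eq_sum, Fintype.sum_sum_type]
    simp [Fin.sum_ite_val_eq_zero hA]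
  have hdist : ∑ j, (if j.isLeft then A else 1) * ((cliqueWithLeaves nA nB).dist (.inr b) j : ℝ) =
      A + (nA - 1) * (2 * A) + (nB - 1) * 2 := by
    rw [Fintype.sum_sum_type]
    simp [Fintype.sum_ite_eq_zero_else, Fin.sum_ite_val_eq_zero hA,
      cliqueWithLeaves_dist_inr_inl hA, cliqueWithLeaves_dist_inr_inr hA, mul_comm]
  rw [cost_eq_add_sum, hdeg, hdist]
  simp only [Sum.isLeft_inr, Bool.false_eq_true, ↓reduceIte]
  ring

end cliqueWithLeaves

theorem cliqueWithLeaves_distances_and_socialCost_general (nA nB : ℕ) (hA : 0 < nA)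
    (A cA cB : ℝ) :
    (∀ b : Fin nB, (cliqueWithLeaves nA nB).dist (.inr b) (.inl ⟨0, hA⟩) = 1) ∧
    (∀ b : Fin nB, ∀ a : Fin nA, (a : ℕ) ≠ 0 →
      (cliqueWithLeaves nA nB).dist (.inr b) (.inl a) = 2) ∧
    (∀ b b' : Fin nB, b ≠ b' →
      (cliqueWithLeaves nA nB).dist (.inr b) (.inr b') = 2) ∧
    socialCost A cA cB (fun v => v.isLeft) (cliqueWithLeaves nA nB) =
      2 * (nB : ℝ) * ((nB : ℝ) - 1 + (cA + cB) / 2 + (A + 1) * ((nA : ℝ) - 1 / 2)) +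
        (nA : ℝ) * ((nA : ℝ) - 1) * (cA + A) := by
  refine ⟨fun b => by simp [cliqueWithLeaves_dist_inr_inl hA],
    fun b a ha => by simp [cliqueWithLeaves_dist_inr_inl hA, ha],
    fun b b' hb => by simp [cliqueWithLeaves_dist_inr_inr hA, hb], ?_⟩
  rw [socialCost, Fintype.sum_sum_type]
  simp only [cost_cliqueWithLeaves_inl A cA cB hA, cost_cliqueWithLeaves_inr A cA cB hA,
    Finset.sum_add_distrib, Fin.sum_ite_val_eq_zero hA]
  simp only [Finset.sum_const, Finset.card_univ, Fintype.card_fin, nsmul_eq_mul]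
  ring

/-- In the clique-with-leaves graph, each type-B node is at distance 1 from the hub,
distance 2 from other type-A nodes and from other type-B nodes, and the social cost equals
`2|T_B|(|T_B| - 1 + c + (A+1)(|T_A| - 1/2)) + |T_A|(|T_A| - 1)(c_A + A)`. -/
theorem cliqueWithLeaves_distances_and_socialCost (nA nB : ℕ) (hA : 0 < nA)
    (A cA cB : ℝ) (hA1 : 1 < A) (hc : 1 < cA) (hcc : cA ≤ cB) :
    (∀ b : Fin nB, (cliqueWithLeaves nA nB).dist (.inr b) (.inl ⟨0, hA⟩) = 1) ∧
    (∀ b : Fin nB, ∀ a : Fin nA, (a : ℕ) ≠ 0 →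
      (cliqueWithLeaves nA nB).dist (.inr b) (.inl a) = 2) ∧
    (∀ b b' : Fin nB, b ≠ b' →
      (cliqueWithLeaves nA nB).dist (.inr b) (.inr b') = 2) ∧
    socialCost A cA cB (fun v => v.isLeft) (cliqueWithLeaves nA nB) =
      2 * (nB : ℝ) * ((nB : ℝ) - 1 + (cA + cB) / 2 + (A + 1) * ((nA : ℝ) - 1 / 2)) +
        (nA : ℝ) * ((nA : ℝ) - 1) * (cA + A) :=
  cliqueWithLeaves_distances_and_socialCost_general nA nB hA A cA cB
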